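/- For homomorphisms of type M₁ ⊗ 𝒪(−d) ⊕ 𝒪(−2) ⊕ 𝒪(−1) → N₁ ⊗ 𝒪 on ℙ(V), the constant c₁(1,1) equals dim(V)/dim(S^{d−1}V). Concretely: let δ : (S^{d−2}V* ⊕ S^{d−1}V*) ⊗ S^d V → S²V ⊕ V be the canonical contraction map. Then the supremum over all proper subspaces K ⊂ S^{d−2}V* ⊕ S^{d−1}V* not contained in either summand of the ratio codim(δ(K ⊗ S^d V)) / codim(K) equals dim V / dim S^{d−1}V. -/

import Mathlib

/-!
Write `Z(K) = {(u, v) ∈ S²V* × V* : f u + g v = 0 for all (f, g) ∈ K}`. By duality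
`δ(K ⊗ S^dV)` is the annihilator of `Z(K)`, so the numerator of the ratio is `dim Z(K)`.
Polynomial rings have no zero divisors, so if `Z(K) ≠ 0` it contains some `(u, v)` with `v ≠ 0`
(otherwise `K ⊆ 0 ⊕ S^{d−1}V*`); then `g` is determined by `f` on `K`, whence
`codim K ≥ dim S^{d−1}V`. Also `(u, v) ↦ v` is injective on `Z(K)` because some `(f, g) ∈ K` has
`f ≠ 0`, whence `dim Z(K) ≤ dim V`. The bound is attained by `K = {(f, X₀ f)}`, whose `Z(K)`
contains `{(−X₀ v, v)}`.
-/

open MvPolynomial Module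

noncomputable section

/-- The space `S^pV*` of homogeneous polynomials of degree `p` on `V = ℂ^{n+1}`. -/
abbrev Sh (n p : ℕ) : Submodule ℂ (MvPolynomial (Fin (n + 1)) ℂ) :=
  homogeneousSubmodule (Fin (n + 1)) ℂ p

/-- Multiplication `S^pV* → (S^qV* →ₗ S^{p+q}V*)` in the symmetric algebra. -/
def mulS (n p q : ℕ) : ↥(Sh n p) →ₗ[ℂ] ↥(Sh n q) →ₗ[ℂ] ↥(Sh n (p + q)) :=
  LinearMap.mk₂ ℂ
    (fun f g => ⟨f.1 * g.1,
      (mem_homogeneousSubmodule _ _).mpr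
        (((mem_homogeneousSubmodule _ _).mp f.2).mul
          ((mem_homogeneousSubmodule _ _).mp g.2))⟩)
    (fun f₁ f₂ g => Subtype.ext (by simp [add_mul]))
    (fun c f g => Subtype.ext (by simp [smul_mul_assoc]))
    (fun f g₁ g₂ => Subtype.ext (by simp [mul_add]))
    (fun c f g => Subtype.ext (by simp [mul_smul_comm]))

/-- Realizing `S^pV` as the dual of `S^pV*` (canonical in characteristic zero), the
contraction map `δ : (S^{d−2}V* ⊕ S^{d−1}V*) ⊗ S^dV → S²V ⊕ V` (`d = e + 2`), curried in
the second variable:  `δ(f, g)(ξ) = (ξ ∘ (f·—), ξ ∘ (g·—))`. -/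
def contr (n e : ℕ) (ξ : Module.Dual ℂ ↥(Sh n (e + 2))) :
    (↥(Sh n e) × ↥(Sh n (e + 1))) →ₗ[ℂ]
      (Module.Dual ℂ ↥(Sh n 2) × Module.Dual ℂ ↥(Sh n 1)) :=
  LinearMap.prodMap
    (((LinearMap.llcomp ℂ ↥(Sh n 2) ↥(Sh n (e + 2)) ℂ) ξ).comp (mulS n e 2))
    (((LinearMap.llcomp ℂ ↥(Sh n 1) ↥(Sh n (e + 2)) ℂ) ξ).comp (mulS n (e + 1) 1))

/-- The image `δ(K ⊗ S^dV)` of `K ⊗ S^dV` under the contraction map. -/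
def contrImg (n e : ℕ) (K : Submodule ℂ (↥(Sh n e) × ↥(Sh n (e + 1)))) :
    Submodule ℂ (Module.Dual ℂ ↥(Sh n 2) × Module.Dual ℂ ↥(Sh n 1)) :=
  ⨆ ξ : Module.Dual ℂ ↥(Sh n (e + 2)), Submodule.map (contr n e ξ) K

section DualityOfPairings

variable {R P Q W : Type*}

theorem LinearMap.mem_ker_domRestrict_flip [CommSemiring R] [AddCommMonoid P] [Module R P]
    [AddCommMonoid Q] [Module R Q] [AddCommMonoid W] [Module R W]
    (β : P →ₗ[R] Q →ₗ[R] W) (K : Submodule R P) (q : Q) :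
    q ∈ LinearMap.ker (β.domRestrict K).flip ↔ ∀ k ∈ K, β k q = 0 := by
  simp [LinearMap.ext_iff]

variable [Field R] [AddCommGroup P] [Module R P] [AddCommGroup Q] [Module R Q]
  [AddCommGroup W] [Module R W] [FiniteDimensional R Q]

theorem iSup_map_compr₂_eq_dualAnnihilator (β : P →ₗ[R] Q →ₗ[R] W) (K : Submodule R P) :
    ⨆ ξ : Dual R W, K.map (β.compr₂ ξ) =
      (LinearMap.ker (β.domRestrict K).flip).dualAnnihilator := by
  apply le_antisymm
  · refine iSup_le fun ξ => ?_
    rintro _ ⟨k, hk, rfl⟩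
    rw [Submodule.mem_dualAnnihilator]
    intro q hq
    simp [(β.mem_ker_domRestrict_flip K q).mp hq k hk]
  · rw [← Subspace.dualCoannihilator_dualAnnihilator_eq
      (W := ⨆ ξ : Dual R W, K.map (β.compr₂ ξ))]
    refine Submodule.dualAnnihilator_anti fun q hq => ?_
    rw [β.mem_ker_domRestrict_flip]
    intro k hk
    rw [← forall_dual_apply_eq_zero_iff R (β k q)]
    intro ξ
    exact (Submodule.mem_dualCoannihilator q).mp hq _
      (Submodule.mem_iSup_of_mem ξ ⟨k, hk, rfl⟩)

theorem finrank_iSup_map_compr₂_add_finrank_ker (β : P →ₗ[R] Q →ₗ[R] W)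
    (K : Submodule R P) :
    finrank R ↥(⨆ ξ : Dual R W, K.map (β.compr₂ ξ)) +
      finrank R (LinearMap.ker (β.domRestrict K).flip) = finrank R Q := by
  rw [iSup_map_compr₂_eq_dualAnnihilator, add_comm]
  exact Subspace.finrank_add_finrank_dualAnnihilator_eq _

end DualityOfPairings

section SumPairing

variable {R A B U V W : Type*} [Field R]
  [AddCommGroup A] [Module R A] [AddCommGroup B] [Module R B]
  [AddCommGroup U] [Module R U] [AddCommGroup V] [Module R V] [AddCommGroup W] [Module R W]
  {μ : A →ₗ[R] U →ₗ[R] W} {ν : B →ₗ[R] V →ₗ[R] W}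

variable (μ ν) in
def sumPairing : A × B →ₗ[R] U × V →ₗ[R] W :=
  μ.compl₁₂ (LinearMap.fst R A B) (LinearMap.fst R U V) +
    ν.compl₁₂ (LinearMap.snd R A B) (LinearMap.snd R U V)

@[simp]
theorem sumPairing_apply (x : A × B) (y : U × V) :
    sumPairing μ ν x y = μ x.1 y.1 + ν x.2 y.2 :=
  rfl

theorem finrank_ker_sumPairing_le [FiniteDimensional R V]
    (hμ : ∀ a u, μ a u = 0 → a = 0 ∨ u = 0) {K : Submodule R (A × B)}
    (hK : ¬ K ≤ Submodule.snd R A B) :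
    finrank R (LinearMap.ker ((sumPairing μ ν).domRestrict K).flip) ≤ finrank R V := by
  obtain ⟨k, hkK, hk⟩ := SetLike.not_le_iff_exists.mp hK
  have hk₁ : k.1 ≠ 0 := fun h => hk (by simpa [Submodule.snd] using h)
  refine LinearMap.finrank_le_finrank_of_injective
    (f := (LinearMap.snd R U V).comp (Submodule.subtype _)) ?_
  rw [injective_iff_map_eq_zero]
  rintro ⟨⟨u, v⟩, hz⟩ (hv : v = 0)
  subst hv
  have hu : μ k.1 u = 0 := by
    simpa using ((sumPairing μ ν).mem_ker_domRestrict_flip K _).mp hz k hkK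
  simp [(hμ _ _ hu).resolve_left hk₁]

theorem finrank_le_of_ker_sumPairing_ne_bot [FiniteDimensional R A]
    (hμ : ∀ a u, μ a u = 0 → a = 0 ∨ u = 0) (hν : ∀ b v, ν b v = 0 → b = 0 ∨ v = 0)
    {K : Submodule R (A × B)} (hK : ¬ K ≤ Submodule.snd R A B)
    (hZ : LinearMap.ker ((sumPairing μ ν).domRestrict K).flip ≠ ⊥) :
    finrank R K ≤ finrank R A := by
  obtain ⟨⟨u, v⟩, hz, huv⟩ := Submodule.exists_mem_ne_zero_of_ne_bot hZ
  have hz := ((sumPairing μ ν).mem_ker_domRestrict_flip K _).mp hz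
  have hv : v ≠ 0 := by
    rintro rfl
    have hu : u ≠ 0 := by simpa using huv
    refine hK fun k hk => ?_
    have hku : μ k.1 u = 0 := by simpa using hz k hk
    simpa [Submodule.snd] using (hμ _ _ hku).resolve_right hu
  refine LinearMap.finrank_le_finrank_of_injective
    (f := (LinearMap.fst R A B).comp K.subtype) ?_
  rw [injective_iff_map_eq_zero]
  rintro ⟨⟨a, b⟩, hk⟩ (ha : a = 0)
  subst ha
  have hbv : ν b v = 0 := by simpa using hz _ hk
  simp [(hν _ _ hbv).resolve_right hv]

theorem finrank_ker_sumPairing_div_le [FiniteDimensional R A] [FiniteDimensional R B]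
    [FiniteDimensional R V]
    (hμ : ∀ a u, μ a u = 0 → a = 0 ∨ u = 0) (hν : ∀ b v, ν b v = 0 → b = 0 ∨ v = 0)
    {K : Submodule R (A × B)} (hKfst : ¬ K ≤ Submodule.fst R A B)
    (hKsnd : ¬ K ≤ Submodule.snd R A B) :
    (finrank R (LinearMap.ker ((sumPairing μ ν).domRestrict K).flip) : ℝ) /
        (finrank R (A × B) - finrank R K) ≤ finrank R V / finrank R B := by
  rcases eq_or_ne (LinearMap.ker ((sumPairing μ ν).domRestrict K).flip) ⊥ with hZ | hZ
  · rw [hZ, finrank_bot, Nat.cast_zero, zero_div]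
    positivity
  have hB : 0 < finrank R B := by
    obtain ⟨k, -, hk⟩ := SetLike.not_le_iff_exists.mp hKfst
    exact finrank_pos_iff_exists_ne_zero.mpr ⟨k.2, by simpa [Submodule.fst] using hk⟩
  have hKA : (finrank R K : ℝ) ≤ finrank R A := by
    exact_mod_cast finrank_le_of_ker_sumPairing_ne_bot hμ hν hKsnd hZ
  rw [finrank_prod, Nat.cast_add]
  refine div_le_div₀ (by positivity) (by exact_mod_cast finrank_ker_sumPairing_le hμ hKsnd)
    (by exact_mod_cast hB) (by linarith)

end SumPairing

instance (n p : ℕ) : FiniteDimensional ℂ ↥(Sh n p) :=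
  Module.Finite.iff_fg.mpr (homogeneousSubmodule_fg _ _ p)

theorem eq_zero_or_eq_zero_of_mulS_eq_zero {n p q : ℕ} {f : ↥(Sh n p)} {g : ↥(Sh n q)}
    (h : mulS n p q f g = 0) : f = 0 ∨ g = 0 := by
  have h' : (f * g : MvPolynomial (Fin (n + 1)) ℂ) = 0 := congrArg Subtype.val h
  rcases mul_eq_zero.mp h' with hf | hg
  · exact .inl (Subtype.ext hf)
  · exact .inr (Subtype.ext hg)

def shX (n : ℕ) (i : Fin (n + 1)) : ↥(Sh n 1) :=
  ⟨X i, isHomogeneous_X ℂ i⟩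

theorem shX_ne_zero (n : ℕ) (i : Fin (n + 1)) : shX n i ≠ 0 :=
  fun h => X_ne_zero (R := ℂ) i (congrArg Subtype.val h)

instance (n p : ℕ) : Nontrivial ↥(Sh n p) :=
  ⟨⟨⟨X 0 ^ p, by simpa using (isHomogeneous_X ℂ (0 : Fin (n + 1))).pow p⟩, 0,
    fun h => pow_ne_zero p (X_ne_zero (R := ℂ) 0) (congrArg Subtype.val h)⟩⟩

theorem finrank_Sh_one (n : ℕ) : finrank ℂ ↥(Sh n 1) = n + 1 := by
  rw [Sh, homogeneousSubmodule_one_eq_span_X,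
    finrank_span_eq_card (linearIndependent_X (Fin (n + 1)) ℂ), Fintype.card_fin]

def mulPairing (n e : ℕ) :
    (↥(Sh n e) × ↥(Sh n (e + 1))) →ₗ[ℂ] (↥(Sh n 2) × ↥(Sh n 1)) →ₗ[ℂ] ↥(Sh n (e + 2)) :=
  sumPairing (mulS n e 2) (mulS n (e + 1) 1)

theorem contr_eq_symm_comp (n e : ℕ) (ξ : Dual ℂ ↥(Sh n (e + 2))) :
    contr n e ξ = (dualProdDualEquivDual ℂ ↥(Sh n 2) ↥(Sh n 1)).symm.toLinearMap ∘ₗ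
      (mulPairing n e).compr₂ ξ :=
  (LinearEquiv.eq_toLinearMap_symm_comp _ _).mpr (by ext x y <;> simp [contr, mulPairing])

theorem contrImg_eq_map (n e : ℕ) (K : Submodule ℂ (↥(Sh n e) × ↥(Sh n (e + 1)))) :
    contrImg n e K = (⨆ ξ : Dual ℂ ↥(Sh n (e + 2)), K.map ((mulPairing n e).compr₂ ξ)).map
      (dualProdDualEquivDual ℂ ↥(Sh n 2) ↥(Sh n 1)).symm.toLinearMap := by
  simp_rw [contrImg, contr_eq_symm_comp, Submodule.map_comp, Submodule.map_iSup]

theorem finrank_contrImg_add_finrank_ker (n e : ℕ)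
    (K : Submodule ℂ (↥(Sh n e) × ↥(Sh n (e + 1)))) :
    finrank ℂ ↥(contrImg n e K) +
        finrank ℂ (LinearMap.ker ((mulPairing n e).domRestrict K).flip) =
      finrank ℂ (Dual ℂ ↥(Sh n 2) × Dual ℂ ↥(Sh n 1)) := by
  rw [contrImg_eq_map, LinearEquiv.finrank_map_eq, finrank_iSup_map_compr₂_add_finrank_ker,
    (dualProdDualEquivDual ℂ ↥(Sh n 2) ↥(Sh n 1)).finrank_eq, Subspace.dual_finrank_eq]

def extremalK (n e : ℕ) : Submodule ℂ (↥(Sh n e) × ↥(Sh n (e + 1))) :=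
  ((mulS n e 1).flip (shX n 0)).graph

theorem finrank_extremalK (n e : ℕ) : finrank ℂ ↥(extremalK n e) = finrank ℂ ↥(Sh n e) := by
  rw [extremalK, LinearMap.graph_eq_range_prod]
  exact LinearMap.finrank_range_of_inj fun a b h => congrArg Prod.fst h

theorem extremalK_ne_top (n e : ℕ) : extremalK n e ≠ ⊤ := by
  obtain ⟨b, hb⟩ := exists_ne (0 : ↥(Sh n (e + 1)))
  intro h
  have hmem : ((0 : ↥(Sh n e)), b) ∈ extremalK n e := h ▸ Submodule.mem_top
  simp [extremalK, LinearMap.mem_graph_iff, hb] at hmem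

theorem extremalK_not_le_fst (n e : ℕ) :
    ¬ extremalK n e ≤ Submodule.fst ℂ ↥(Sh n e) ↥(Sh n (e + 1)) := by
  obtain ⟨a, ha⟩ := exists_ne (0 : ↥(Sh n e))
  intro h
  have hmem := h ((LinearMap.mem_graph_iff _ (a, (mulS n e 1).flip (shX n 0) a)).mpr rfl)
  exact (eq_zero_or_eq_zero_of_mulS_eq_zero ((Submodule.mem_bot ℂ).mp hmem)).elim ha
    (shX_ne_zero n 0)

theorem extremalK_not_le_snd (n e : ℕ) :
    ¬ extremalK n e ≤ Submodule.snd ℂ ↥(Sh n e) ↥(Sh n (e + 1)) := by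
  obtain ⟨a, ha⟩ := exists_ne (0 : ↥(Sh n e))
  intro h
  have hmem := h ((LinearMap.mem_graph_iff _ (a, (mulS n e 1).flip (shX n 0) a)).mpr rfl)
  exact ha ((Submodule.mem_bot ℂ).mp hmem)

theorem finrank_ker_extremalK (n e : ℕ) :
    finrank ℂ (LinearMap.ker ((mulPairing n e).domRestrict (extremalK n e)).flip) = n + 1 := by
  refine le_antisymm ?_ ?_
  · exact (finrank_ker_sumPairing_le (fun _ _ => eq_zero_or_eq_zero_of_mulS_eq_zero)
      (extremalK_not_le_snd n e)).trans_eq (finrank_Sh_one n)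
  · let j : ↥(Sh n 1) →ₗ[ℂ] ↥(Sh n 2) × ↥(Sh n 1) :=
      (-(mulS n 1 1 (shX n 0))).prod LinearMap.id
    have hj : LinearMap.range j ≤
        LinearMap.ker ((mulPairing n e).domRestrict (extremalK n e)).flip := by
      rintro _ ⟨v, rfl⟩
      rw [LinearMap.mem_ker_domRestrict_flip]
      rintro ⟨f, g⟩ hfg
      rw [extremalK, LinearMap.mem_graph_iff] at hfg
      dsimp only at hfg
      subst hfg
      apply Subtype.ext
      change f.1 * -(X 0 * v.1) + f.1 * X 0 * v.1 = 0
      ring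
    calc n + 1 = finrank ℂ (LinearMap.range j) :=
          (finrank_Sh_one n).symm.trans
            (LinearMap.finrank_range_of_inj fun a b h => congrArg Prod.snd h).symm
      _ ≤ _ := Submodule.finrank_mono hj

/-- For homomorphisms of type `M₁ ⊗ 𝒪(−d) ⊕ 𝒪(−2) ⊕ 𝒪(−1) → N₁ ⊗ 𝒪` on `ℙ(V)` the
constant `c₁(1,1)` equals `dim V / dim S^{d−1}V`:  the supremum, over all proper subspaces
`K ⊂ S^{d−2}V* ⊕ S^{d−1}V*` not contained in either summand, of
`codim(δ(K ⊗ S^dV)) / codim K`, equals `dim V / dim S^{d−1}V`  (`d = e + 2`,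
`dim V = n + 1`). -/
theorem stmt6 (n e : ℕ) :
    sSup {x : ℝ | ∃ K : Submodule ℂ (↥(Sh n e) × ↥(Sh n (e + 1))),
        K ≠ ⊤ ∧ ¬ K ≤ Submodule.fst ℂ ↥(Sh n e) ↥(Sh n (e + 1)) ∧
        ¬ K ≤ Submodule.snd ℂ ↥(Sh n e) ↥(Sh n (e + 1)) ∧
        x = ((finrank ℂ (Module.Dual ℂ ↥(Sh n 2) × Module.Dual ℂ ↥(Sh n 1)) : ℝ)
              - (finrank ℂ ↥(contrImg n e K) : ℝ)) /
            ((finrank ℂ (↥(Sh n e) × ↥(Sh n (e + 1))) : ℝ) - (finrank ℂ ↥K : ℝ))}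
      = (n + 1 : ℝ) / (finrank ℂ ↥(Sh n (e + 1)) : ℝ) := by
  have codim_contrImg (K : Submodule ℂ (↥(Sh n e) × ↥(Sh n (e + 1)))) :
      (finrank ℂ (Dual ℂ ↥(Sh n 2) × Dual ℂ ↥(Sh n 1)) : ℝ) - finrank ℂ ↥(contrImg n e K) =
        finrank ℂ (LinearMap.ker ((mulPairing n e).domRestrict K).flip) := by
    rw [← finrank_contrImg_add_finrank_ker n e K, Nat.cast_add, add_sub_cancel_left]
  refine IsGreatest.csSup_eq ⟨⟨extremalK n e, extremalK_ne_top n e, extremalK_not_le_fst n e,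
    extremalK_not_le_snd n e, ?_⟩, ?_⟩
  · rw [codim_contrImg, finrank_ker_extremalK, finrank_prod, finrank_extremalK]
    push_cast
    ring
  · rintro _ ⟨K, -, hKfst, hKsnd, rfl⟩
    have h := finrank_ker_sumPairing_div_le (μ := mulS n e 2) (ν := mulS n (e + 1) 1)
      (fun _ _ => eq_zero_or_eq_zero_of_mulS_eq_zero)
      (fun _ _ => eq_zero_or_eq_zero_of_mulS_eq_zero) hKfst hKsnd
    rw [finrank_Sh_one, Nat.cast_add, Nat.cast_one] at h
    rwa [codim_contrImg, mulPairing]
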